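/- arXiv:0811.2249 — 3 statements merged into one kernel-verified Lean document; each statement's English description precedes it below -/
import Mathlib

section
/- Let R ∈ ℝ with R ≠ 0 and let (i,j) be an interior grid point. Then the constraint function g¹_{i,j} : ((Fin N × Fin N) → ℝ) × ((Fin N × Fin N) → ℝ) → ℝ is neither convex nor concave on the whole space: ¬ ConvexOn ℝ Set.univ g¹_{i,j} and ¬ ConcaveOn ℝ Set.univ g¹_{i,j}. -/
/-!
On the plane `ψ = c • e_{(i+1,j)}`, `ω = d • e_{(i,j+1)}` the function `g¹_{i,j}` reduces to
`d + (R/4) c d`. Its quadratic part `c d` is an indefinite form, convex along the diagonal and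
concave along the antidiagonal, so this restriction is neither convex nor concave when `R ≠ 0`;
since convexity and concavity pass to compositions with linear maps, neither is `g¹_{i,j}`.
-/

open Finset

/-- 1-based grid index into `Fin N` (for in-range `1 ≤ i ≤ N` this is the point `i`). -/
def gridIdx {N : ℕ} (hN : 3 ≤ N) (i : ℕ) : Fin N := ⟨(i - 1) % N, Nat.mod_lt _ (by omega)⟩

/-- The constraint function `g¹_{i,j}` (discretized vorticity transport equation). -/
noncomputable def g1 {N : ℕ} (hN : 3 ≤ N) (R : ℝ) (i j : ℕ)
    (ψ ω : Fin N × Fin N → ℝ) : ℝ :=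
  -4 * ω (gridIdx hN i, gridIdx hN j) + ω (gridIdx hN (i+1), gridIdx hN j)
    + ω (gridIdx hN (i-1), gridIdx hN j) + ω (gridIdx hN i, gridIdx hN (j+1))
    + ω (gridIdx hN i, gridIdx hN (j-1))
    + (R / 4) *
      ((ψ (gridIdx hN (i+1), gridIdx hN j) - ψ (gridIdx hN (i-1), gridIdx hN j))
          * (ω (gridIdx hN i, gridIdx hN (j+1)) - ω (gridIdx hN i, gridIdx hN (j-1)))
        - (ψ (gridIdx hN i, gridIdx hN (j+1)) - ψ (gridIdx hN i, gridIdx hN (j-1)))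
          * (ω (gridIdx hN (i+1), gridIdx hN j) - ω (gridIdx hN (i-1), gridIdx hN j)))

theorem gridIdx_eq_gridIdx_iff {N : ℕ} (hN : 3 ≤ N) {a b : ℕ} (ha : a ∈ Finset.Icc 1 N)
    (hb : b ∈ Finset.Icc 1 N) : gridIdx hN a = gridIdx hN b ↔ a = b := by
  rw [Finset.mem_Icc] at ha hb
  simp only [gridIdx, Fin.mk.injEq]
  rw [Nat.mod_eq_of_lt (by omega), Nat.mod_eq_of_lt (by omega)]
  omega

theorem g1_single_single {N : ℕ} (hN : 3 ≤ N) (R : ℝ) {i j : ℕ}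
    (hi : i ∈ Finset.Icc 2 (N - 1)) (hj : j ∈ Finset.Icc 2 (N - 1)) (c d : ℝ) :
    g1 hN R i j (Pi.single (gridIdx hN (i + 1), gridIdx hN j) c)
      (Pi.single (gridIdx hN i, gridIdx hN (j + 1)) d) = d + R / 4 * (c * d) := by
  rw [Finset.mem_Icc] at hi hj
  simp (disch := simp only [Finset.mem_Icc]; omega) only
    [g1, Pi.single_apply, Prod.mk.injEq, gridIdx_eq_gridIdx_iff]
  split_ifs <;> first | omega | ring

theorem not_convexOn_univ_saddle {k : ℝ} (hk : k ≠ 0) (a : ℝ) :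
    ¬ ConvexOn ℝ Set.univ (fun x : ℝ × ℝ => a * x.2 + k * (x.1 * x.2)) := by
  intro hf
  have midpoint_le (x : ℝ × ℝ) := hf.2 (Set.mem_univ x) (Set.mem_univ (-x))
    (by norm_num : (0 : ℝ) ≤ 1 / 2) (by norm_num : (0 : ℝ) ≤ 1 / 2) (by norm_num)
  -- at the midpoint `0` of `x` and `-x` the linear term cancels, leaving `0 ≤ k * x.1 * x.2`
  have hdiag := midpoint_le (1, 1)
  have hanti := midpoint_le (1, -1)
  norm_num at hdiag hanti
  exact hk (by linarith)

theorem not_concaveOn_univ_saddle {k : ℝ} (hk : k ≠ 0) (a : ℝ) :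
    ¬ ConcaveOn ℝ Set.univ (fun x : ℝ × ℝ => a * x.2 + k * (x.1 * x.2)) := fun hf ↦ by
  have hneg : (-fun x : ℝ × ℝ => a * x.2 + k * (x.1 * x.2)) =
      fun x => -a * x.2 + -k * (x.1 * x.2) := by
    ext x; simp only [Pi.neg_apply]; ring
  exact not_convexOn_univ_saddle (neg_ne_zero.2 hk) (-a) (hneg ▸ hf.neg)

/-- for `R ≠ 0` and an interior grid point `(i,j)`, the constraint
function `g¹_{i,j}` is neither convex nor concave on the whole space. -/
theorem g1_not_convexOn_not_concaveOn {N : ℕ} (hN : 3 ≤ N) (R : ℝ) (hR : R ≠ 0)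
    (i j : ℕ) (hi : i ∈ Finset.Icc 2 (N-1)) (hj : j ∈ Finset.Icc 2 (N-1)) :
    ¬ ConvexOn ℝ (Set.univ : Set (((Fin N × Fin N) → ℝ) × ((Fin N × Fin N) → ℝ)))
        (fun p => g1 hN R i j p.1 p.2)
    ∧ ¬ ConcaveOn ℝ (Set.univ : Set (((Fin N × Fin N) → ℝ) × ((Fin N × Fin N) → ℝ)))
        (fun p => g1 hN R i j p.1 p.2) := by
  let plane : ℝ × ℝ →ₗ[ℝ] ((Fin N × Fin N) → ℝ) × ((Fin N × Fin N) → ℝ) :=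
    (LinearMap.single ℝ (fun _ ↦ ℝ) (gridIdx hN (i + 1), gridIdx hN j)).prodMap
      (LinearMap.single ℝ (fun _ ↦ ℝ) (gridIdx hN i, gridIdx hN (j + 1)))
  have hplane : (fun p => g1 hN R i j p.1 p.2) ∘ plane =
      fun x : ℝ × ℝ => 1 * x.2 + R / 4 * (x.1 * x.2) := by
    ext x
    simp [plane, g1_single_single hN R hi hj]
  have hk : R / 4 ≠ 0 := div_ne_zero hR four_ne_zero
  exact ⟨fun hf ↦ not_convexOn_univ_saddle hk 1 (hplane ▸ hf.comp_linearMap plane),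
    fun hf ↦ not_concaveOn_univ_saddle hk 1 (hplane ▸ hf.comp_linearMap plane)⟩
end

section
/- Let u, v : ℝ × ℝ → ℝ be continuously differentiable (ContDiff ℝ 1) and suppose the incompressibility condition holds everywhere: for all p ∈ ℝ × ℝ, fderiv ℝ u p (1,0) + fderiv ℝ v p (0,1) = 0. Then there exists a differentiable stream function ψ : ℝ × ℝ → ℝ such that for all p, fderiv ℝ ψ p (1,0) = −v(p) and fderiv ℝ ψ p (0,1) = u(p). -/
open Function ContinuousLinearMap Metric Set
open scoped Interval

/-!
Take `ψ(x, y) = ∫₀ʸ u(x, t) dt - ∫₀ˣ v(s, 0) ds`. By the fundamental theorem of calculus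
`∂ψ/∂y = u`. Differentiating under the integral sign and using `∂u/∂x = -∂v/∂y`,
`∂ψ/∂x = (v(x, 0) - v(x, y)) - v(x, 0) = -v(x, y)`. Both partial derivatives are continuous,
so `ψ` is differentiable with these partials.
-/

section Partials

variable {E : Type*} [NormedAddCommGroup E] [NormedSpace ℝ E]

theorem hasFDerivAt_uncurry_of_continuous_partials {f f₁ f₂ : ℝ → ℝ → E}
    (hf₁ : ∀ x y, HasDerivAt (f · y) (f₁ x y) x) (hf₂ : ∀ x y, HasDerivAt (f x ·) (f₂ x y) y)
    (hc₁ : Continuous ↿f₁) (hc₂ : Continuous ↿f₂) (p : ℝ × ℝ) :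
    HasFDerivAt ↿f ((toSpanSingleton ℝ (↿f₁ p)).coprod (toSpanSingleton ℝ (↿f₂ p))) p :=
  (hasStrictFDerivAt_uncurry_coprod (f₁ := fun x y => toSpanSingleton ℝ (f₁ x y))
    (f₂ := fun x y => toSpanSingleton ℝ (f₂ x y))
    (.of_forall fun q => hf₁ q.1 q.2) (.of_forall fun q => hf₂ q.1 q.2)
    (toSpanSingletonCLE.continuous.comp hc₁).continuousAt
    (toSpanSingletonCLE.continuous.comp hc₂).continuousAt).hasFDerivAt

theorem hasDerivAt_intervalIntegral_of_continuous_partial {F F' : ℝ → ℝ → E}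
    (hF : ∀ x, Continuous (F x)) (hF' : Continuous ↿F')
    (hdiff : ∀ x t, HasDerivAt (F · t) (F' x t) x) (a b x₀ : ℝ) :
    HasDerivAt (fun x => ∫ t in a..b, F x t) (∫ t in a..b, F' x₀ t) x₀ := by
  obtain ⟨C, hC⟩ := (isCompact_closedBall x₀ 1 |>.prod isCompact_uIcc).exists_bound_of_continuousOn
    (hF'.continuousOn (s := closedBall x₀ 1 ×ˢ [[a, b]]))
  refine (intervalIntegral.hasDerivAt_integral_of_dominated_loc_of_deriv_le (bound := fun _ => C)
    (ball_mem_nhds x₀ one_pos) (.of_forall fun x => (hF x).aestronglyMeasurable)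
    ((hF x₀).intervalIntegrable _ _)
    (hF'.comp (Continuous.prodMk_right x₀)).aestronglyMeasurable ?_ intervalIntegrable_const
    (.of_forall fun t _ x _ => hdiff x t)).2
  exact .of_forall fun t ht x hx => hC (x, t) ⟨ball_subset_closedBall hx, uIoc_subset_uIcc ht⟩

variable {f : ℝ × ℝ → E} {f' : ℝ × ℝ →L[ℝ] E} {x y : ℝ}

theorem HasFDerivAt.hasDerivAt_partial_fst (hf : HasFDerivAt f f' (x, y)) :
    HasDerivAt (fun x => f (x, y)) (f' (1, 0)) x :=
  hf.comp_hasDerivAt x ((hasDerivAt_id x).prodMk (hasDerivAt_const x y))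

theorem HasFDerivAt.hasDerivAt_partial_snd (hf : HasFDerivAt f f' (x, y)) :
    HasDerivAt (fun y => f (x, y)) (f' (0, 1)) y :=
  hf.comp_hasDerivAt y ((hasDerivAt_const y x).prodMk (hasDerivAt_id y))

end Partials

noncomputable def streamFunction (u v : ℝ × ℝ → ℝ) (x y : ℝ) : ℝ :=
  (∫ t in 0..y, u (x, t)) - ∫ s in 0..x, v (s, 0)

section StreamFunction

variable {u v : ℝ × ℝ → ℝ}

theorem hasDerivAt_streamFunction_snd (hu : Continuous u) (x y : ℝ) :
    HasDerivAt (streamFunction u v x ·) (u (x, y)) y :=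
  ((hu.comp (Continuous.prodMk_right x)).integral_hasStrictDerivAt 0 y).hasDerivAt.sub_const _

theorem hasDerivAt_streamFunction_fst (hu : ContDiff ℝ 1 u) (hv : Differentiable ℝ v)
    (hdiv : ∀ p, fderiv ℝ u p (1, 0) + fderiv ℝ v p (0, 1) = 0) (x y : ℝ) :
    HasDerivAt (streamFunction u v · y) (-v (x, y)) x := by
  have hu₁ : Continuous fun p : ℝ × ℝ => fderiv ℝ u p (1, 0) :=
    (hu.continuous_fderiv one_ne_zero).clm_apply continuous_const
  have hint : HasDerivAt (fun x => ∫ t in 0..y, u (x, t))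
      (∫ t in 0..y, fderiv ℝ u (x, t) (1, 0)) x :=
    hasDerivAt_intervalIntegral_of_continuous_partial
      (fun x => hu.continuous.comp (Continuous.prodMk_right x)) hu₁
      (fun x t => ((hu.differentiable one_ne_zero) (x, t)).hasFDerivAt.hasDerivAt_partial_fst) 0 y x
  have hint_eq : ∫ t in 0..y, fderiv ℝ u (x, t) (1, 0) = v (x, 0) - v (x, y) := by
    have hneg : ∀ t, fderiv ℝ v (x, t) (0, 1) = -fderiv ℝ u (x, t) (1, 0) := fun t => by
      linarith [hdiv (x, t)]
    have hv_ftc := intervalIntegral.integral_eq_sub_of_hasDerivAt (a := 0) (b := y)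
      (fun t _ => (hv (x, t)).hasFDerivAt.hasDerivAt_partial_snd)
      (by simp only [hneg]; exact (hu₁.comp (Continuous.prodMk_right x)).neg.intervalIntegrable _ _)
    rw [funext hneg, intervalIntegral.integral_neg] at hv_ftc
    linarith
  have hv₀ : HasDerivAt (fun x => ∫ s in 0..x, v (s, 0)) (v (x, 0)) x :=
    ((hv.continuous.comp (Continuous.prodMk_left 0)).integral_hasStrictDerivAt 0 x).hasDerivAt
  have := hint.sub hv₀
  rwa [hint_eq, sub_sub_cancel_left] at this

end StreamFunction

/-- a `C¹` divergence-free planar velocity field `(u, v)` admits a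
differentiable stream function `ψ` with `∂ψ/∂x = −v` and `∂ψ/∂y = u`. -/
theorem exists_stream_function (u v : ℝ × ℝ → ℝ)
    (hu : ContDiff ℝ 1 u) (hv : ContDiff ℝ 1 v)
    (hdiv : ∀ p : ℝ × ℝ, fderiv ℝ u p (1, 0) + fderiv ℝ v p (0, 1) = 0) :
    ∃ ψ : ℝ × ℝ → ℝ, Differentiable ℝ ψ ∧
      ∀ p : ℝ × ℝ, fderiv ℝ ψ p (1, 0) = -v p ∧ fderiv ℝ ψ p (0, 1) = u p := by
  have hψ := hasFDerivAt_uncurry_of_continuous_partials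
    (hasDerivAt_streamFunction_fst hu (hv.differentiable one_ne_zero) hdiv)
    (hasDerivAt_streamFunction_snd hu.continuous) hv.continuous.neg hu.continuous
  refine ⟨↿(streamFunction u v), fun p => (hψ p).differentiableAt, fun p => ?_⟩
  rw [(hψ p).fderiv]
  simp [HasUncurry.uncurry]
end

section
/- Fix an integer N ≥ 3, a real h > 0, and a boundary velocity s ∈ ℝ. Then there exists exactly one pair of grid functions (ψ, ω), ψ, ω : (Fin N × Fin N) → ℝ, satisfying all of the following: (i) for every interior point (i,j): −4ψ_{i,j} + ψ_{i+1,j} + ψ_{i−1,j} + ψ_{i,j+1} + ψ_{i,j−1} + h²·ω_{i,j} = 0; (ii) for every interior point (i,j): −4ω_{i,j} + ω_{i+1,j} + ω_{i−1,j} + ω_{i,j+1} + ω_{i,j−1} = 0; (iii) ψ_{i,j} = 0 at every boundary point; (iv) for 2 ≤ j ≤ N−1: ω_{1,j} = −2ψ_{2,j}/h² and ω_{N,j} = −2ψ_{N−1,j}/h²; for 2 ≤ i ≤ N−1: ω_{i,1} = −2ψ_{i,2}/h² and ω_{i,N} = −(2ψ_{i,N−1} + 2sh)/h²; (v) ω =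 0 at the four corner points (1,1), (1,N), (N,1), (N,N). That is, the discrete steady cavity flow problem with Reynolds number R = 0 admits a unique solution. -/
/-!
Each grid point carries exactly one equation of the system (the Poisson or vorticity equation
at interior points, a boundary condition elsewhere), so the system is a square linear system
`L (ψ, ω) = c` with `c` depending only on `s`, and it suffices that the homogeneous problem
`s = 0` has only the trivial solution.

For that, summation by parts gives Green's identity `∑ u Δv = (boundary flux) - D(u, v)` with
the symmetric Dirichlet form `D`. For `(u, v) = (ψ, ω)` the flux vanishes with `ψ` and
`Δω = 0`, so `D(ψ, ω) = 0`. For `(u, v) = (ω, ψ)`, `Δψ = -h²ω` inside and the wall conditions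
turn the flux into `h²/2 ∑ ω²` over the edges, whence
`∑_interior ω² + ½ ∑_edges ω² = 0`. Thus `ω = 0` (corners by (v)), then `Δψ = 0` gives
`D(ψ, ψ) = 0`, so `ψ` is constant along rows and vanishes with its boundary values.
-/

open Finset

theorem sum_Icc_mul_secondDiff_by_parts (a b : ℕ → ℝ) {N : ℕ} (hN : 2 ≤ N) :
    ∑ i ∈ Icc 2 (N-1), a i * (b (i+1) + b (i-1) - 2 * b i)
      = a N * (b N - b (N-1)) - a 1 * (b 2 - b 1)
        - ∑ i ∈ Icc 1 (N-1), (a (i+1) - a i) * (b (i+1) - b i) := by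
  induction N, hN using Nat.le_induction with
  | base =>
    rw [Icc_eq_empty (by decide), Icc_self, sum_empty, sum_singleton]
    ring
  | succ n hn ih =>
    obtain ⟨m, rfl⟩ : ∃ m, n = m + 1 := ⟨n - 1, by omega⟩
    simp only [Nat.add_sub_cancel] at ih ⊢
    rw [sum_Icc_succ_top (by omega), sum_Icc_succ_top (by omega), ih, Nat.add_sub_cancel]
    ring

def discreteLaplacian (u : ℕ → ℕ → ℝ) (i j : ℕ) : ℝ :=
  -4 * u i j + u (i+1) j + u (i-1) j + u i (j+1) + u i (j-1)

def dirichletForm (N : ℕ) (u v : ℕ → ℕ → ℝ) : ℝ :=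
  ∑ j ∈ Icc 2 (N-1), ∑ i ∈ Icc 1 (N-1), (u (i+1) j - u i j) * (v (i+1) j - v i j)
    + ∑ i ∈ Icc 2 (N-1), ∑ j ∈ Icc 1 (N-1), (u i (j+1) - u i j) * (v i (j+1) - v i j)

theorem dirichletForm_comm (N : ℕ) (u v : ℕ → ℕ → ℝ) :
    dirichletForm N u v = dirichletForm N v u := by
  simp only [dirichletForm, mul_comm]

def boundaryFlux (N : ℕ) (u v : ℕ → ℕ → ℝ) : ℝ :=
  ∑ j ∈ Icc 2 (N-1), (u N j * (v N j - v (N-1) j) - u 1 j * (v 2 j - v 1 j))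
    + ∑ i ∈ Icc 2 (N-1), (u i N * (v i N - v i (N-1)) - u i 1 * (v i 2 - v i 1))

theorem sum_mul_discreteLaplacian {N : ℕ} (hN : 2 ≤ N) (u v : ℕ → ℕ → ℝ) :
    ∑ i ∈ Icc 2 (N-1), ∑ j ∈ Icc 2 (N-1), u i j * discreteLaplacian v i j
      = boundaryFlux N u v - dirichletForm N u v := by
  have split : ∀ i j, u i j * discreteLaplacian v i j
      = u i j * (v (i+1) j + v (i-1) j - 2 * v i j) + u i j * (v i (j+1) + v i (j-1) - 2 * v i j) :=
    fun i j => by unfold discreteLaplacian; ring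
  have rows := fun j => sum_Icc_mul_secondDiff_by_parts (u · j) (v · j) hN
  have cols := fun i => sum_Icc_mul_secondDiff_by_parts (u i) (v i) hN
  simp only [split, sum_add_distrib, cols]
  rw [sum_comm (s := Icc 2 (N-1)) (t := Icc 2 (N-1))]
  simp only [rows, sum_sub_distrib, boundaryFlux, dirichletForm]
  ring

theorem boundaryFlux_of_left_eq_zero {N : ℕ} {u : ℕ → ℕ → ℝ} (v : ℕ → ℕ → ℝ)
    (hu : ∀ k ∈ Icc 2 (N-1), u 1 k = 0 ∧ u N k = 0 ∧ u k 1 = 0 ∧ u k N = 0) :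
    boundaryFlux N u v = 0 := by
  simp +contextual [boundaryFlux, hu]

theorem boundaryFlux_of_right_eq_zero {N : ℕ} (u : ℕ → ℕ → ℝ) {v : ℕ → ℕ → ℝ}
    (hv : ∀ k ∈ Icc 2 (N-1), v 1 k = 0 ∧ v N k = 0 ∧ v k 1 = 0 ∧ v k N = 0) :
    boundaryFlux N u v = -∑ k ∈ Icc 2 (N-1),
      (u 1 k * v 2 k + u N k * v (N-1) k + u k 1 * v k 2 + u k N * v k (N-1)) := by
  simp +contextual only [boundaryFlux, hv, ← sum_add_distrib, ← sum_neg_distrib]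
  exact sum_congr rfl fun k _ => by ring

theorem mem_Icc_one_cases {N i : ℕ} (hi : i ∈ Icc 1 N) :
    i = 1 ∨ i = N ∨ i ∈ Icc 2 (N-1) := by
  simp only [mem_Icc] at hi ⊢
  omega

theorem eq_zero_of_dirichletForm_self_eq_zero {N : ℕ} {u : ℕ → ℕ → ℝ}
    (hu : ∀ i ∈ Icc 1 N, ∀ j ∈ Icc 1 N, (i = 1 ∨ i = N ∨ j = 1 ∨ j = N) → u i j = 0)
    (hD : dirichletForm N u u = 0) : ∀ i ∈ Icc 1 N, ∀ j ∈ Icc 1 N, u i j = 0 := by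
  have hrows := ((add_eq_zero_iff_of_nonneg
    (sum_nonneg fun _ _ => sum_nonneg fun _ _ => mul_self_nonneg _)
    (sum_nonneg fun _ _ => sum_nonneg fun _ _ => mul_self_nonneg _)).mp hD).1
  have hstep : ∀ j ∈ Icc 2 (N-1), ∀ i ∈ Icc 1 (N-1), u (i+1) j = u i j := by
    intro j hj i hi
    have hrow := (sum_eq_zero_iff_of_nonneg fun _ _ => sum_nonneg fun _ _ => mul_self_nonneg _).mp
      hrows j hj
    have := (sum_eq_zero_iff_of_nonneg fun _ _ => mul_self_nonneg _).mp hrow i hi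
    exact sub_eq_zero.mp (mul_self_eq_zero.mp this)
  intro i hi j hj
  rcases mem_Icc_one_cases hj with rfl | rfl | hj'
  · exact hu i hi _ hj (by tauto)
  · exact hu i hi _ hj (by tauto)
  induction i with
  | zero => simp only [mem_Icc] at hi; omega
  | succ i ih =>
    simp only [mem_Icc] at hi
    rcases Nat.eq_zero_or_pos i with rfl | hpos
    · exact hu 1 (by simp only [mem_Icc]; omega) j hj (Or.inl rfl)
    rw [hstep j hj' i (by simp only [mem_Icc]; omega)]
    exact ih (by simp only [mem_Icc]; omega)

structure IsCavitySolution (N : ℕ) (h s : ℝ) (ψ ω : ℕ → ℕ → ℝ) : Prop where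
  poisson :
    ∀ i ∈ Icc 2 (N-1), ∀ j ∈ Icc 2 (N-1), discreteLaplacian ψ i j + h ^ 2 * ω i j = 0
  harmonic_vorticity : ∀ i ∈ Icc 2 (N-1), ∀ j ∈ Icc 2 (N-1), discreteLaplacian ω i j = 0
  stream_boundary :
    ∀ i ∈ Icc 1 N, ∀ j ∈ Icc 1 N, (i = 1 ∨ i = N ∨ j = 1 ∨ j = N) → ψ i j = 0
  vorticity_left : ∀ j ∈ Icc 2 (N-1), ω 1 j = -2 * ψ 2 j / h ^ 2
  vorticity_right : ∀ j ∈ Icc 2 (N-1), ω N j = -2 * ψ (N-1) j / h ^ 2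
  vorticity_bottom : ∀ i ∈ Icc 2 (N-1), ω i 1 = -2 * ψ i 2 / h ^ 2
  vorticity_lid : ∀ i ∈ Icc 2 (N-1), ω i N = -(2 * ψ i (N-1) + 2 * s * h) / h ^ 2
  corner_one_one : ω 1 1 = 0
  corner_one_N : ω 1 N = 0
  corner_N_one : ω N 1 = 0
  corner_N_N : ω N N = 0

namespace IsCavitySolution

variable {N : ℕ} {h s : ℝ} {ψ ω : ℕ → ℕ → ℝ}

theorem stream_edge (hsol : IsCavitySolution N h s ψ ω) :
    ∀ k ∈ Icc 2 (N-1), ψ 1 k = 0 ∧ ψ N k = 0 ∧ ψ k 1 = 0 ∧ ψ k N = 0 := by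
  intro k hk
  have hk' : k ∈ Icc 1 N := by simp only [mem_Icc] at hk ⊢; omega
  have h1mem : 1 ∈ Icc 1 N := by simp only [mem_Icc] at hk ⊢; omega
  have hNmem : N ∈ Icc 1 N := by simp only [mem_Icc] at hk ⊢; omega
  exact ⟨hsol.stream_boundary 1 h1mem k hk' (by tauto),
    hsol.stream_boundary N hNmem k hk' (by tauto), hsol.stream_boundary k hk' 1 h1mem (by tauto),
    hsol.stream_boundary k hk' N hNmem (by tauto)⟩

theorem vorticity_energy_eq_zero (hN : 2 ≤ N) (hh : h ≠ 0)
    (hsol : IsCavitySolution N h 0 ψ ω) :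
    ∑ i ∈ Icc 2 (N-1), ∑ j ∈ Icc 2 (N-1), ω i j ^ 2
      + (1/2) * ∑ k ∈ Icc 2 (N-1), (ω 1 k ^ 2 + ω N k ^ 2 + ω k 1 ^ 2 + ω k N ^ 2) = 0 := by
  have hD : dirichletForm N ψ ω = 0 := by
    have green := sum_mul_discreteLaplacian hN ψ ω
    rw [boundaryFlux_of_left_eq_zero _ hsol.stream_edge,
      sum_eq_zero fun i hi => sum_eq_zero fun j hj => by
        rw [hsol.harmonic_vorticity i hi j hj, mul_zero]] at green
    linarith
  have green := sum_mul_discreteLaplacian hN ω ψ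
  rw [boundaryFlux_of_right_eq_zero _ hsol.stream_edge, dirichletForm_comm, hD, sub_zero] at green
  have hinterior : ∑ i ∈ Icc 2 (N-1), ∑ j ∈ Icc 2 (N-1), ω i j * discreteLaplacian ψ i j
      = -h ^ 2 * ∑ i ∈ Icc 2 (N-1), ∑ j ∈ Icc 2 (N-1), ω i j ^ 2 := by
    simp only [mul_sum]
    refine sum_congr rfl fun i hi => sum_congr rfl fun j hj => ?_
    linear_combination ω i j * hsol.poisson i hi j hj
  -- the boundary conditions for `ω` say that `ψ` next to the wall is `-h²/2` times `ω` on it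
  have hedges : ∑ k ∈ Icc 2 (N-1),
      (ω 1 k * ψ 2 k + ω N k * ψ (N-1) k + ω k 1 * ψ k 2 + ω k N * ψ k (N-1))
      = -(h ^ 2 / 2) *
          ∑ k ∈ Icc 2 (N-1), (ω 1 k ^ 2 + ω N k ^ 2 + ω k 1 ^ 2 + ω k N ^ 2) := by
    rw [mul_sum]
    refine sum_congr rfl fun k hk => ?_
    rw [hsol.vorticity_left k hk, hsol.vorticity_right k hk, hsol.vorticity_bottom k hk,
      hsol.vorticity_lid k hk]
    field_simp
    ring
  rw [hinterior, hedges] at green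
  apply mul_left_cancel₀ (pow_ne_zero 2 hh)
  linear_combination -green

theorem vorticity_eq_zero (hN : 2 ≤ N) (hh : h ≠ 0) (hsol : IsCavitySolution N h 0 ψ ω) :
    ∀ i ∈ Icc 1 N, ∀ j ∈ Icc 1 N, ω i j = 0 := by
  obtain ⟨hQ0, hE0⟩ := (add_eq_zero_iff_of_nonneg
    (sum_nonneg fun _ _ => sum_nonneg fun _ _ => sq_nonneg _) (by positivity)).mp
    (hsol.vorticity_energy_eq_zero hN hh)
  replace hE0 := (mul_eq_zero.mp hE0).resolve_left one_half_pos.ne'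
  have hinterior : ∀ i ∈ Icc 2 (N-1), ∀ j ∈ Icc 2 (N-1), ω i j = 0 := by
    intro i hi j hj
    have hrow := (sum_eq_zero_iff_of_nonneg fun _ _ => sum_nonneg fun _ _ => sq_nonneg _).mp
      hQ0 i hi
    exact pow_eq_zero_iff two_ne_zero |>.mp <|
      (sum_eq_zero_iff_of_nonneg fun _ _ => sq_nonneg _).mp hrow j hj
  have hedge : ∀ k ∈ Icc 2 (N-1), ω 1 k = 0 ∧ ω N k = 0 ∧ ω k 1 = 0 ∧ ω k N = 0 := by
    intro k hk
    have := (sum_eq_zero_iff_of_nonneg fun _ _ => by positivity).mp hE0 k hk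
    refine ⟨?_, ?_, ?_, ?_⟩ <;> nlinarith [sq_nonneg (ω 1 k), sq_nonneg (ω N k),
      sq_nonneg (ω k 1), sq_nonneg (ω k N)]
  intro i hi j hj
  rcases mem_Icc_one_cases hi with rfl | rfl | hi' <;>
    rcases mem_Icc_one_cases hj with rfl | rfl | hj'
  exacts [hsol.corner_one_one, hsol.corner_one_N, (hedge j hj').1, hsol.corner_N_one,
    hsol.corner_N_N, (hedge j hj').2.1, (hedge i hi').2.2.1, (hedge i hi').2.2.2,
    hinterior i hi' j hj']

theorem stream_eq_zero (hN : 2 ≤ N) (hh : h ≠ 0) (hsol : IsCavitySolution N h 0 ψ ω) :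
    ∀ i ∈ Icc 1 N, ∀ j ∈ Icc 1 N, ψ i j = 0 := by
  have hω := hsol.vorticity_eq_zero hN hh
  refine eq_zero_of_dirichletForm_self_eq_zero hsol.stream_boundary ?_
  have green := sum_mul_discreteLaplacian hN ψ ψ
  rw [boundaryFlux_of_left_eq_zero _ hsol.stream_edge,
    sum_eq_zero fun i hi => sum_eq_zero fun j hj => ?_] at green
  · linarith
  have hij : ω i j = 0 := hω i (by simp only [mem_Icc] at hi ⊢; omega) j
    (by simp only [mem_Icc] at hj ⊢; omega)
  linear_combination ψ i j * hsol.poisson i hi j hj - h ^ 2 * ψ i j * hij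

end IsCavitySolution

noncomputable section

def poissonResidual (N : ℕ) (h : ℝ) (ψ ω : ℕ → ℕ → ℝ) (i j : ℕ) : ℝ :=
  if i ∈ Icc 2 (N-1) ∧ j ∈ Icc 2 (N-1) then discreteLaplacian ψ i j + h ^ 2 * ω i j
  else ψ i j

def vorticityResidual (N : ℕ) (h : ℝ) (ψ ω : ℕ → ℕ → ℝ) (i j : ℕ) : ℝ :=
  if i ∈ Icc 2 (N-1) ∧ j ∈ Icc 2 (N-1) then discreteLaplacian ω i j
  else if i = 1 ∧ j ∈ Icc 2 (N-1) then ω i j + 2 * ψ 2 j / h ^ 2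
  else if i = N ∧ j ∈ Icc 2 (N-1) then ω i j + 2 * ψ (N-1) j / h ^ 2
  else if i ∈ Icc 2 (N-1) ∧ j = 1 then ω i j + 2 * ψ i 2 / h ^ 2
  else if i ∈ Icc 2 (N-1) ∧ j = N then ω i j + 2 * ψ i (N-1) / h ^ 2
  else ω i j

def lidForcing (N : ℕ) (h s : ℝ) (i j : ℕ) : ℝ :=
  if i ∈ Icc 2 (N-1) ∧ j = N then -(2 * s * h) / h ^ 2 else 0

theorem IsCavitySolution.residual_eq {N : ℕ} (hN : 2 ≤ N) {h s : ℝ} {ψ ω : ℕ → ℕ → ℝ}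
    (hsol : IsCavitySolution N h s ψ ω) : ∀ i ∈ Icc 1 N, ∀ j ∈ Icc 1 N,
      poissonResidual N h ψ ω i j = 0
        ∧ vorticityResidual N h ψ ω i j = lidForcing N h s i j := by
  have h1 : 1 ∉ Icc 2 (N-1) := by simp only [mem_Icc]; omega
  have hN' : N ∉ Icc 2 (N-1) := by simp only [mem_Icc]; omega
  have h1N : 1 ≠ N := by omega
  have hinner : ∀ k ∈ Icc 2 (N-1), k ≠ 1 ∧ k ≠ N := by
    intro k hk; simp only [mem_Icc] at hk; omega
  intro i hi j hj
  have hψ := hsol.stream_boundary i hi j hj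
  rcases mem_Icc_one_cases hi with rfl | rfl | hi' <;>
    rcases mem_Icc_one_cases hj with rfl | rfl | hj' <;>
    simp only [poissonResidual, vorticityResidual, lidForcing, hsol.corner_one_one,
      hsol.corner_one_N, hsol.corner_N_one, hsol.corner_N_N, h1N.symm, *, true_and,
      and_true, and_false, if_true, if_false, and_self, true_or, or_true]
  · rw [hsol.vorticity_left j hj']; ring
  · rw [hsol.vorticity_right j hj']; ring
  · rw [hsol.vorticity_bottom i hi']; ring
  · rw [hsol.vorticity_lid i hi']; ring
  · exact ⟨hsol.poisson i hi' j hj', hsol.harmonic_vorticity i hi' j hj'⟩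

theorem IsCavitySolution.of_residual {N : ℕ} (hN : 2 ≤ N) {h s : ℝ} {ψ ω : ℕ → ℕ → ℝ}
    (H : ∀ i ∈ Icc 1 N, ∀ j ∈ Icc 1 N, poissonResidual N h ψ ω i j = 0
      ∧ vorticityResidual N h ψ ω i j = lidForcing N h s i j) :
    IsCavitySolution N h s ψ ω := by
  have h1 : 1 ∉ Icc 2 (N-1) := by simp only [mem_Icc]; omega
  have hN' : N ∉ Icc 2 (N-1) := by simp only [mem_Icc]; omega
  have h1N : 1 ≠ N := by omega
  have hinner : ∀ k ∈ Icc 2 (N-1), k ≠ 1 ∧ k ≠ N := by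
    intro k hk; simp only [mem_Icc] at hk; omega
  have h1mem : 1 ∈ Icc 1 N := by simp only [mem_Icc]; omega
  have hNmem : N ∈ Icc 1 N := by simp only [mem_Icc]; omega
  have hsub : Icc 2 (N-1) ⊆ Icc 1 N := Icc_subset_Icc (by norm_num) (by omega)
  refine ⟨fun i hi j hj => ?_, fun i hi j hj => ?_, fun i hi j hj hb => ?_, fun j hj => ?_,
    fun j hj => ?_, fun i hi => ?_, fun i hi => ?_, ?_, ?_, ?_, ?_⟩
  · simpa [poissonResidual, hi, hj] using (H i (hsub hi) j (hsub hj)).1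
  · simpa [vorticityResidual, lidForcing, hi, hj, hinner] using (H i (hsub hi) j (hsub hj)).2
  · have hnot : ¬(i ∈ Icc 2 (N-1) ∧ j ∈ Icc 2 (N-1)) := by
      simp only [mem_Icc] at hi hj ⊢; omega
    simpa only [poissonResidual, if_neg hnot] using (H i hi j hj).1
  · have := (H 1 h1mem j (hsub hj)).2
    simp only [vorticityResidual, lidForcing, h1, hj, h1N, and_true, false_and, and_self,
      if_true, if_false] at this
    linear_combination this
  · have := (H N hNmem j (hsub hj)).2
    simp only [vorticityResidual, lidForcing, hN', h1N.symm, hj, and_true, false_and, and_self,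
      if_true, if_false] at this
    linear_combination this
  · have := (H i (hsub hi) 1 h1mem).2
    simp only [vorticityResidual, lidForcing, h1, hi, hinner, h1N, and_false, and_self,
      if_true, if_false] at this
    linear_combination this
  · have := (H i (hsub hi) N hNmem).2
    simp only [vorticityResidual, lidForcing, hN', hi, hinner, h1N.symm, and_false, and_self,
      if_true, if_false] at this
    linear_combination this
  · simpa [vorticityResidual, lidForcing, h1, h1N] using (H 1 h1mem 1 h1mem).2
  · simpa [vorticityResidual, lidForcing, h1, hN', h1N] using (H 1 h1mem N hNmem).2
  · simpa [vorticityResidual, lidForcing, h1, hN', h1N.symm] using (H N hNmem 1 h1mem).2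
  · simpa [vorticityResidual, lidForcing, hN', h1N.symm] using (H N hNmem N hNmem).2

theorem isCavitySolution_iff_residual {N : ℕ} (hN : 2 ≤ N) {h s : ℝ}
    {ψ ω : ℕ → ℕ → ℝ} :
    IsCavitySolution N h s ψ ω ↔ ∀ i ∈ Icc 1 N, ∀ j ∈ Icc 1 N,
      poissonResidual N h ψ ω i j = 0
        ∧ vorticityResidual N h ψ ω i j = lidForcing N h s i j :=
  ⟨fun hsol => hsol.residual_eq hN, IsCavitySolution.of_residual hN⟩

theorem forall_fin_iff_forall_mem_Icc {N : ℕ} {P : ℕ → Prop} :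
    (∀ a : Fin N, P (a.val + 1)) ↔ ∀ i ∈ Icc 1 N, P i := by
  refine ⟨fun H i hi => ?_, fun H a => H _ (by simp only [mem_Icc]; omega)⟩
  simp only [mem_Icc] at hi
  simpa [Nat.sub_add_cancel hi.1] using H ⟨i - 1, by omega⟩

abbrev GridPair (N : ℕ) : Type := (Fin N × Fin N → ℝ) × (Fin N × Fin N → ℝ)

section Grid

variable {N : ℕ} (hN : 3 ≤ N)

theorem gridIdx_val_add_one (a : Fin N) : gridIdx hN (a.val + 1) = a :=
  Fin.ext (by simp [gridIdx, Nat.mod_eq_of_lt a.isLt])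

def natGrid (u : Fin N × Fin N → ℝ) (i j : ℕ) : ℝ := u (gridIdx hN i, gridIdx hN j)

theorem natGrid_val_add_one (u : Fin N × Fin N → ℝ) (a b : Fin N) :
    natGrid hN u (a.val + 1) (b.val + 1) = u (a, b) := by
  simp only [natGrid, gridIdx_val_add_one]

theorem eq_zero_of_natGrid_eq_zero {u : Fin N × Fin N → ℝ}
    (hu : ∀ i ∈ Icc 1 N, ∀ j ∈ Icc 1 N, natGrid hN u i j = 0) : u = 0 := by
  funext ⟨a, b⟩
  rw [← natGrid_val_add_one hN u a b]
  exact forall_fin_iff_forall_mem_Icc.mpr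
    (fun i hi => forall_fin_iff_forall_mem_Icc.mpr (hu i hi) b) a

def cavityOperator (h : ℝ) : GridPair N →ₗ[ℝ] GridPair N where
  toFun p :=
    (fun q => poissonResidual N h (natGrid hN p.1) (natGrid hN p.2) (q.1 + 1) (q.2 + 1),
     fun q => vorticityResidual N h (natGrid hN p.1) (natGrid hN p.2) (q.1 + 1) (q.2 + 1))
  map_add' p p' := by
    ext q <;> simp only [poissonResidual, vorticityResidual, discreteLaplacian, natGrid,
      Prod.fst_add, Prod.snd_add, Pi.add_apply] <;> split_ifs <;> ring
  map_smul' c p := by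
    ext q <;> simp only [poissonResidual, vorticityResidual, discreteLaplacian, natGrid,
      Prod.smul_fst, Prod.smul_snd, Pi.smul_apply, smul_eq_mul, RingHom.id_apply] <;>
      split_ifs <;> ring

def cavityRHS (N : ℕ) (h s : ℝ) : GridPair N :=
  (0, fun q => lidForcing N h s (q.1 + 1) (q.2 + 1))

theorem cavityRHS_zero (h : ℝ) : cavityRHS N h 0 = 0 := by
  ext q <;> simp [cavityRHS, lidForcing]

theorem cavityOperator_eq_cavityRHS_iff {h s : ℝ} (p : GridPair N) :
    cavityOperator hN h p = cavityRHS N h s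
      ↔ IsCavitySolution N h s (natGrid hN p.1) (natGrid hN p.2) := by
  rw [isCavitySolution_iff_residual (by omega)]
  simp only [← forall_fin_iff_forall_mem_Icc, Prod.ext_iff, funext_iff, Prod.forall,
    ← forall_and]
  rfl

theorem existsUnique_isCavitySolution {h : ℝ} (hh : h ≠ 0) (s : ℝ) :
    ∃! p : GridPair N, IsCavitySolution N h s (natGrid hN p.1) (natGrid hN p.2) := by
  have hinj : Function.Injective (cavityOperator hN h) := by
    rw [← LinearMap.ker_eq_bot, LinearMap.ker_eq_bot']
    intro p hp
    have hsol := (cavityOperator_eq_cavityRHS_iff hN p).mp (hp.trans (cavityRHS_zero h).symm)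
    exact Prod.ext (eq_zero_of_natGrid_eq_zero hN (hsol.stream_eq_zero (by omega) hh))
      (eq_zero_of_natGrid_eq_zero hN (hsol.vorticity_eq_zero (by omega) hh))
  obtain ⟨p, hp⟩ := LinearMap.injective_iff_surjective.mp hinj (cavityRHS N h s)
  refine ⟨p, (cavityOperator_eq_cavityRHS_iff hN p).mp hp, fun q hq => hinj ?_⟩
  exact ((cavityOperator_eq_cavityRHS_iff hN q).mpr hq).trans hp.symm

end Grid

end

/-- the discrete steady cavity flow problem with Reynolds number
`R = 0` has exactly one solution `(ψ, ω)`. -/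
theorem discrete_cavity_flow_R_zero_unique_solution
    (N : ℕ) (hN : 3 ≤ N) (h : ℝ) (hh : 0 < h) (s : ℝ) :
    ∃! p : ((Fin N × Fin N) → ℝ) × ((Fin N × Fin N) → ℝ),
      -- (i) discretized Poisson equation at interior points
      (∀ i ∈ Finset.Icc 2 (N-1), ∀ j ∈ Finset.Icc 2 (N-1),
        -4 * p.1 (gridIdx hN i, gridIdx hN j) + p.1 (gridIdx hN (i+1), gridIdx hN j)
          + p.1 (gridIdx hN (i-1), gridIdx hN j) + p.1 (gridIdx hN i, gridIdx hN (j+1))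
          + p.1 (gridIdx hN i, gridIdx hN (j-1))
          + h ^ 2 * p.2 (gridIdx hN i, gridIdx hN j) = 0)
      -- (ii) discretized vorticity equation (R = 0) at interior points
      ∧ (∀ i ∈ Finset.Icc 2 (N-1), ∀ j ∈ Finset.Icc 2 (N-1),
        -4 * p.2 (gridIdx hN i, gridIdx hN j) + p.2 (gridIdx hN (i+1), gridIdx hN j)
          + p.2 (gridIdx hN (i-1), gridIdx hN j) + p.2 (gridIdx hN i, gridIdx hN (j+1))
          + p.2 (gridIdx hN i, gridIdx hN (j-1)) = 0)
      -- (iii) ψ vanishes at boundary points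
      ∧ (∀ i ∈ Finset.Icc 1 N, ∀ j ∈ Finset.Icc 1 N,
          (i = 1 ∨ i = N ∨ j = 1 ∨ j = N) → p.1 (gridIdx hN i, gridIdx hN j) = 0)
      -- (iv) boundary conditions for ω on the four open edges
      ∧ (∀ j ∈ Finset.Icc 2 (N-1),
          p.2 (gridIdx hN 1, gridIdx hN j) = -2 * p.1 (gridIdx hN 2, gridIdx hN j) / h ^ 2)
      ∧ (∀ j ∈ Finset.Icc 2 (N-1),
          p.2 (gridIdx hN N, gridIdx hN j) = -2 * p.1 (gridIdx hN (N-1), gridIdx hN j) / h ^ 2)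
      ∧ (∀ i ∈ Finset.Icc 2 (N-1),
          p.2 (gridIdx hN i, gridIdx hN 1) = -2 * p.1 (gridIdx hN i, gridIdx hN 2) / h ^ 2)
      ∧ (∀ i ∈ Finset.Icc 2 (N-1),
          p.2 (gridIdx hN i, gridIdx hN N)
            = -(2 * p.1 (gridIdx hN i, gridIdx hN (N-1)) + 2 * s * h) / h ^ 2)
      -- (v) ω vanishes at the four corners
      ∧ p.2 (gridIdx hN 1, gridIdx hN 1) = 0
      ∧ p.2 (gridIdx hN 1, gridIdx hN N) = 0
      ∧ p.2 (gridIdx hN N, gridIdx hN 1) = 0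
      ∧ p.2 (gridIdx hN N, gridIdx hN N) = 0 := by
  refine (existsUnique_congr fun p => ?_).mpr (existsUnique_isCavitySolution hN hh.ne' s)
  exact ⟨fun ⟨h1, h2, h3, h4, h5, h6, h7, h8, h9, h10, h11⟩ =>
      ⟨h1, h2, h3, h4, h5, h6, h7, h8, h9, h10, h11⟩,
    fun ⟨h1, h2, h3, h4, h5, h6, h7, h8, h9, h10, h11⟩ =>
      ⟨h1, h2, h3, h4, h5, h6, h7, h8, h9, h10, h11⟩⟩
end
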